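/- In the prefix-sum tree computation, for every node v, the top-down value t_v equals the sum of leaf values a_j over all leaves j strictly to the left of the leftmost leaf in the subtree of v. -/

import Mathlib

/-- Bottom-up values of the prefix-sum tree computation (subtree leaf-sums). -/
def sFun (d : ℕ) (a : ℕ → ℤ) : ℕ → ℕ → ℤ
  | 0, k => a k
  | f + 1, k => ∑ j ∈ Finset.range d, sFun d a f (k * d + j)

/-- Top-down values: the root receives `0`, and the `i`-th child of a node `v` receives
`t_v + Σ_{j<i} s_{child_j(v)}`. (Node `(l+1,k)` is the `(k mod d)`-th child of `(l, ⌊k/d⌋)`.) -/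
def tFun (d : ℕ) (a : ℕ → ℤ) (L : ℕ) : ℕ → ℕ → ℤ
  | 0, _ => 0
  | l + 1, k =>
      tFun d a L l (k / d) +
        ∑ j ∈ Finset.range (k % d), sFun d a (L - 1 - (l + 1)) ((k / d) * d + j)

/-!
Write `P n = ∑_{j<n} a_j`. The subtree of a node `k` at height `f` has leaves
`[k·dᶠ, (k+1)·dᶠ)`, so its leaf-sum is `P((k+1)·dᶠ) - P(k·dᶠ)`. Leaf-sums of consecutive siblings
therefore telescope, and by induction on the depth the `r`-th child of `q` (at height `f`) receives
`P(q·d·dᶠ) + P((q·d+r)·dᶠ) - P(q·d·dᶠ)`, the prefix sum up to its leftmost leaf.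
-/

open Finset

lemma sum_range_add_eq_sub_of_eq_sub {G : Type*} [AddCommGroup G] (P g : ℕ → G) (c : ℕ)
    (hg : ∀ k, g k = P ((k + 1) * c) - P (k * c)) (m r : ℕ) :
    ∑ j ∈ range r, g (m + j) = P ((m + r) * c) - P (m * c) := by
  simpa only [hg, add_assoc, add_zero] using sum_range_sub (fun j => P ((m + j) * c)) r

lemma sFun_eq_sub (d : ℕ) (a : ℕ → ℤ) (f k : ℕ) :
    sFun d a f k = ∑ j ∈ range ((k + 1) * d ^ f), a j - ∑ j ∈ range (k * d ^ f), a j := by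
  induction f generalizing k with
  | zero => simp [sFun, sum_range_succ]
  | succ f ih =>
    rw [sFun, sum_range_add_eq_sub_of_eq_sub (fun n => ∑ j ∈ range n, a j) _ _ ih, pow_succ]
    congr 3 <;> ring

theorem stmt5_general (d L : ℕ) (a : ℕ → ℤ) (l k : ℕ)
    (hl : l ≤ L - 1) (hk : k < d ^ l) :
    tFun d a L l k = ∑ j ∈ Finset.range (k * d ^ (L - 1 - l)), a j := by
  induction l generalizing k with
  | zero =>
    obtain rfl : k = 0 := by simpa using hk
    simp [tFun]
  | succ l ih =>
    have hparent : k / d < d ^ l := Nat.div_lt_of_lt_mul (pow_succ' d l ▸ hk)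
    rw [tFun, ih (k / d) (by omega) hparent,
      sum_range_add_eq_sub_of_eq_sub (fun n => ∑ j ∈ range n, a j) _ _ (sFun_eq_sub d a _),
      Nat.div_add_mod', show L - 1 - l = L - 1 - (l + 1) + 1 by omega, pow_succ', ← mul_assoc, add_sub_cancel]

/-- In the prefix-sum tree computation on a complete `d`-ary tree with `d^(L-1)` leaves
holding integers `a_i`, for every node `v = (l,k)`, the top-down value `t_v` equals the sum
of leaf values `a_j` over all leaves `j` strictly to the left of the leftmost leaf
`k·d^(L-1-l)` of the subtree of `v`. -/
theorem stmt5 (d L : ℕ) (a : ℕ → ℤ) (l k : ℕ) (hd : 2 ≤ d) (hL : 1 ≤ L)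
    (hl : l ≤ L - 1) (hk : k < d ^ l) :
    tFun d a L l k = ∑ j ∈ Finset.range (k * d ^ (L - 1 - l)), a j :=
  stmt5_general d L a l k hl hk
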